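/- arXiv:1003.5611 — 7 statements merged into one kernel-verified Lean document; each statement's English description precedes it below -/
import Mathlib

section
/- Let G be a finite group, C ⊆ G \ {e} an ad-stable subset, and K(a,b) = |Z(ab) ∩ C| the Killing form. If there exist b, b' ∈ C and a nontrivial central element c ∈ Z(G) with b = b'c, then the matrix K has two equal columns (indexed by b and b'), hence is degenerate. -/
lemma mul_mul_central_comm_iff {G : Type*} [Group G] {c : G} (hc : c ∈ Subgroup.center G)
    (h x : G) : h * (x * c) = x * c * h ↔ h * x = x * h := by
  have hch : c * h = h * c := (Subgroup.mem_center_iff.mp hc h).symm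
  rw [← mul_assoc, mul_assoc x, hch, ← mul_assoc, mul_left_inj]

lemma Finset.filter_comm_mul_central {G : Type*} [Group G] [DecidableEq G] (s : Finset G)
    {c : G} (hc : c ∈ Subgroup.center G) (x : G) :
    s.filter (fun h => h * (x * c) = x * c * h) = s.filter (fun h => h * x = x * h) :=
  Finset.filter_congr fun h _ => mul_mul_central_comm_iff hc h x

theorem stmt_4_general {G : Type*} [Group G] [DecidableEq G]
    (C : Finset G)
    (b b' : C) (c : G) (hc : c ∈ Subgroup.center G) (hc1 : c ≠ 1)
    (hbb' : (b : G) = (b' : G) * c) :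
    b ≠ b' ∧
    (∀ a ∈ C, (C.filter fun h => h * (a * b) = (a * b) * h).card
      = (C.filter fun h => h * (a * b') = (a * b') * h).card) ∧
    Matrix.det (Matrix.of fun a b : C =>
      ((C.filter fun h => h * ((a : G) * b) = ((a : G) * b) * h).card : ℝ)) = 0 := by
  have hne : b ≠ b' := fun h => hc1 (left_eq_mul.mp (h ▸ hbb'))
  have hcol : ∀ a : G, (C.filter fun h => h * (a * b) = (a * b) * h)
      = (C.filter fun h => h * (a * b') = (a * b') * h) := fun a => by
    rw [hbb', ← mul_assoc, C.filter_comm_mul_central hc]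
  exact ⟨hne, fun a _ => by rw [hcol a],
    Matrix.det_zero_of_column_eq hne fun a => by simp only [Matrix.of_apply, hcol]⟩

/-- If `b = b'·c` with `c` a nontrivial central element and `b, b' ∈ C`, then the
Killing form matrix `K(a,b) = |Z(ab) ∩ C|` has two equal columns (indexed by `b`
and `b'`), hence is degenerate. -/
theorem stmt_4 {G : Type*} [Group G] [Fintype G] [DecidableEq G]
    (C : Finset G) (h1 : (1 : G) ∉ C)
    (had : ∀ g a : G, a ∈ C → g * a * g⁻¹ ∈ C)
    (b b' : C) (c : G) (hc : c ∈ Subgroup.center G) (hc1 : c ≠ 1)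
    (hbb' : (b : G) = (b' : G) * c) :
    b ≠ b' ∧
    (∀ a ∈ C, (C.filter fun h => h * (a * b) = (a * b) * h).card
      = (C.filter fun h => h * (a * b') = (a * b') * h).card) ∧
    Matrix.det (Matrix.of fun a b : C =>
      ((C.filter fun h => h * ((a : G) * b) = ((a : G) * b) * h).card : ℝ)) = 0 :=
  stmt_4_general C b b' c hc hc1 hbb'
end

section
/- Let G be a finite group with |G| > 2 and nontrivial centre Z(G). Then the Killing form of the universal calculus, i.e. the matrix K(a,b) = |Z(ab) ∩ (G \ {e})| indexed by a, b ∈ G \ {e}, is degenerate (has determinant zero). -/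
/-- If `|G| > 2` and the centre of `G` is nontrivial, then the Killing form of
the universal calculus, `K(a,b) = |Z(ab) ∩ (G \ {e})|` for `a, b ∈ G \ {e}`,
is degenerate. -/
theorem stmt_5 {G : Type*} [Group G] [Fintype G] [DecidableEq G]
    (hcard : 2 < Fintype.card G) (hZ : Subgroup.center G ≠ ⊥) :
    Matrix.det (Matrix.of fun a b : {x : G // x ≠ 1} =>
      ((Finset.univ.filter fun h : G =>
        h ≠ 1 ∧ h * ((a : G) * b) = ((a : G) * b) * h).card : ℝ)) = 0 := by
  -- get a nontrivial central element z
  obtain ⟨z, hzZ, hz1⟩ : ∃ z ∈ Subgroup.center G, z ≠ 1 := by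
    by_contra h
    push_neg at h
    exact hZ (Subgroup.eq_bot_iff_forall _ |>.2 h)
  -- get a with a ∉ {1, z⁻¹}
  obtain ⟨a, ha⟩ : ∃ a : G, a ∉ ({1, z⁻¹} : Finset G) := by
    by_contra h
    push_neg at h
    have hsub : (Finset.univ : Finset G) ⊆ {1, z⁻¹} := fun x _ => h x
    have : Fintype.card G ≤ ({1, z⁻¹} : Finset G).card := by
      rw [← Finset.card_univ]; exact Finset.card_le_card hsub
    have h2 : ({1, z⁻¹} : Finset G).card ≤ 2 := Finset.card_insert_le _ _ |>.trans (by simp)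
    omega
  simp only [Finset.mem_insert, Finset.mem_singleton, not_or] at ha
  obtain ⟨ha1, haz⟩ := ha
  have hza : z * a ≠ 1 := fun h => haz (eq_inv_of_mul_eq_one_right h)
  apply Matrix.det_zero_of_row_eq (i := ⟨a, ha1⟩) (j := ⟨z * a, hza⟩)
  · intro h
    apply hz1
    have := congrArg Subtype.val h
    simp only at this
    have : z * a = 1 * a := by rw [one_mul, ← this]
    exact mul_right_cancel this
  · funext b
    simp only [Matrix.of_apply]
    refine congrArg Nat.cast (congrArg Finset.card (Finset.filter_congr ?_))
    intro h _
    have hzc : ∀ g : G, z * g = g * z := fun g => (Subgroup.mem_center_iff.1 hzZ g).symm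
    have key : ∀ g : G, h * g = g * h ↔ h * (z * g) = z * g * h := by
      intro g
      constructor
      · intro hc
        rw [← mul_assoc, ← hzc h, mul_assoc, hc, ← mul_assoc]
      · intro hc
        have h2 : z * (h * g) = z * (g * h) := by
          rw [← mul_assoc, hzc h, mul_assoc, hc, mul_assoc]
        exact mul_left_cancel h2
    rw [mul_assoc z]
    exact and_congr_right fun _ => key (a * ↑b)
end

section
/- Let G be a finite group and W a finite-dimensional complex representation of G. The symmetric bilinear form K_W on the group algebra ℂG defined by K_W(a,b) = χ_W(ab) for a,b ∈ G (extended bilinearly) is nondegenerate if and only if every irreducible complex representation of G occurs in W with positive multiplicity. -/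
/-!
For `x = ∑ b, v b • b` in `ℂ[G]`, the vector `K_W v` has entries `tr (ρ_W a * ρ_W x)`.

If an irreducible `V` does not occur in `W`, then `v b = χ_V b⁻¹` is a nonzero kernel vector:
`∑ g, χ_V g⁻¹ * χ_W (a * g)` is the trace of `ρ_W a ∘ (∑ g, g)` acting on `V →ₗ W`, and
`∑ g, g` is `|G|` times the projection onto the invariants `Hom_G(V, W) = 0`.

Conversely, by Weyl's unitary trick we may take every `ρ_W g` unitary; then `(ρ_W x)ᴴ` is again
of the form `ρ_W y`, so `tr ((ρ_W x)ᴴ * ρ_W x) = 0` and `ρ_W x = 0`. If every irreducible embeds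
in `W`, then `x` annihilates every simple left ideal of the semisimple ring `ℂ[G]`, so `x = 0`.
-/

open CategoryTheory Representation
open scoped Matrix ComplexOrder

universe u

namespace Matrix

variable {𝕜 n G : Type*} [RCLike 𝕜] [Fintype n] [DecidableEq n] [Group G] [Fintype G]

theorem posDef_sum_conjTranspose_mul_self (B : G →* Matrix n n 𝕜) :
    (∑ g, (B g)ᴴ * B g).PosDef := by
  classical
  rw [← Finset.add_sum_erase _ _ (Finset.mem_univ 1), map_one, conjTranspose_one, one_mul]
  exact PosDef.one.add_posSemidef
    (posSemidef_sum _ fun g _ ↦ posSemidef_conjTranspose_mul_self (B g))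

theorem conjTranspose_mul_sum_conjTranspose_mul_self_mul (B : G →* Matrix n n 𝕜) (h : G) :
    (B h)ᴴ * (∑ g, (B g)ᴴ * B g) * B h = ∑ g, (B g)ᴴ * B g := by
  rw [Finset.mul_sum, Finset.sum_mul]
  refine Fintype.sum_equiv (Equiv.mulRight h) _ _ fun g ↦ ?_
  simp only [Equiv.coe_mulRight, map_mul, conjTranspose_mul, Matrix.mul_assoc]

open scoped MatrixOrder in
/-- Weyl's unitary trick: `R` is a square root of the `G`-invariant positive definite matrix
`∑ g, (B g)ᴴ * B g`, so conjugation by `R` makes every `B g` unitary. -/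
theorem exists_isUnit_conjTranspose_conj (B : G →* Matrix n n 𝕜) :
    ∃ R : Matrix n n 𝕜, IsUnit R ∧ ∀ g, (R * B g * R⁻¹)ᴴ = R * B g⁻¹ * R⁻¹ := by
  have hP := posDef_sum_conjTranspose_mul_self B
  obtain ⟨R, hR⟩ := CStarAlgebra.nonneg_iff_eq_star_mul_self.mp hP.posSemidef.nonneg
  rw [star_eq_conjTranspose] at hR
  have hRdet : IsUnit R.det := by
    have := (isUnit_iff_isUnit_det _).mp hP.isUnit
    rw [hR, det_mul] at this
    exact isUnit_of_mul_isUnit_right this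
  refine ⟨R, (isUnit_iff_isUnit_det R).mpr hRdet, fun g ↦ ?_⟩
  have hBP : (B g)ᴴ * (∑ h, (B h)ᴴ * B h) = (∑ h, (B h)ᴴ * B h) * B g⁻¹ := by
    conv_lhs => rw [← Matrix.mul_one (_ * _), ← map_one B, ← mul_inv_cancel g, map_mul,
      ← Matrix.mul_assoc, conjTranspose_mul_sum_conjTranspose_mul_self_mul]
  apply ((isUnit_iff_isUnit_det Rᴴ).mpr (by rwa [det_conjTranspose, isUnit_star])).mul_left_cancel
  rw [conjTranspose_mul, conjTranspose_mul, ← Matrix.mul_assoc, ← conjTranspose_mul,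
    nonsing_inv_mul _ hRdet, conjTranspose_one, Matrix.one_mul, ← Matrix.mul_assoc,
    ← Matrix.mul_assoc, ← hR, ← hBP, hR, Matrix.mul_assoc, Matrix.mul_assoc,
    mul_nonsing_inv _ hRdet, Matrix.mul_one]

theorem sum_smul_eq_zero_of_conjTranspose_eq_inv {B : G → Matrix n n 𝕜}
    (hB : ∀ g, (B g)ᴴ = B g⁻¹) {v : G → 𝕜} (h : ∀ a, trace (B a * ∑ b, v b • B b) = 0) :
    ∑ b, v b • B b = 0 := by
  rw [← trace_conjTranspose_mul_self_eq_zero_iff, conjTranspose_sum, Finset.sum_mul, trace_sum]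
  refine Finset.sum_eq_zero fun b _ ↦ ?_
  rw [conjTranspose_smul, hB, smul_mul_assoc, trace_smul, h, smul_zero]

theorem sum_smul_eq_zero_of_trace_mul_eq_zero (B : G →* Matrix n n 𝕜) {v : G → 𝕜}
    (h : ∀ a, trace (B a * ∑ b, v b • B b) = 0) : ∑ b, v b • B b = 0 := by
  obtain ⟨R, hR, hRB⟩ := exists_isUnit_conjTranspose_conj B
  have hRdet := (isUnit_iff_isUnit_det R).mp hR
  have hconj : ∀ M N : Matrix n n 𝕜, R * M * R⁻¹ * (R * N * R⁻¹) = R * (M * N) * R⁻¹ := by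
    intro M N
    rw [Matrix.mul_assoc, ← Matrix.mul_assoc R⁻¹, ← Matrix.mul_assoc R⁻¹, nonsing_inv_mul _ hRdet,
      Matrix.one_mul, ← Matrix.mul_assoc, ← Matrix.mul_assoc, Matrix.mul_assoc _ M]
  have hsum : ∑ b, v b • (R * B b * R⁻¹) = R * (∑ b, v b • B b) * R⁻¹ := by
    simp only [Finset.mul_sum, Finset.sum_mul, mul_smul_comm, smul_mul_assoc]
  have key := sum_smul_eq_zero_of_conjTranspose_eq_inv (B := fun g ↦ R * B g * R⁻¹) hRB
    (v := v) fun a ↦ by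
      rw [hsum, hconj, trace_mul_cycle, nonsing_inv_mul _ hRdet, Matrix.one_mul, h]
  rw [hsum] at key
  simpa [Matrix.mul_assoc, nonsing_inv_mul _ hRdet, nonsing_inv_mul_cancel_left _ _ hRdet] using
    congrArg (R⁻¹ * · * R) key

end Matrix

theorem eq_zero_of_mem_annihilator_of_isSimpleModule {R : Type*} [Ring R] [IsSemisimpleModule R R]
    {x : R} (hx : ∀ S : Submodule R R, IsSimpleModule R S → x ∈ S.annihilator) : x = 0 := by
  have : x ∈ (⊤ : Submodule R R).annihilator := by
    rw [← IsSemisimpleModule.sSup_simples_eq_top, sSup_eq_iSup', Submodule.annihilator_iSup,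
      Submodule.mem_iInf]
    exact fun S ↦ hx S S.2
  simpa using Submodule.mem_annihilator.mp this 1 trivial

namespace Representation

theorem asAlgebraHom_ofModule' {k G M : Type*} [CommSemiring k] [Monoid G] [AddCommMonoid M]
    [Module k M] [Module (MonoidAlgebra k G) M] [IsScalarTower k (MonoidAlgebra k G) M]
    (x : MonoidAlgebra k G) (m : M) : (ofModule' M).asAlgebraHom x m = x • m := by
  simp [asAlgebraHom, ofModule']

theorem isIrreducible_ofModule' {k G M : Type*} [Field k] [Monoid G] [AddCommGroup M]
    [Module k M] [Module (MonoidAlgebra k G) M] [IsScalarTower k (MonoidAlgebra k G) M]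
    [IsSimpleModule (MonoidAlgebra k G) M] : (ofModule' (k := k) (G := G) M).IsIrreducible := by
  rw [irreducible_iff_isSimpleModule_asModule]
  exact IsSimpleModule.congr
    { (ofModule' M).asModuleEquiv with
      map_smul' := fun x m ↦ by simp [asModuleEquiv_map_smul, asAlgebraHom_ofModule'] }

theorem IntertwiningMap.map_asAlgebraHom_apply {k G V W : Type*} [CommSemiring k] [Monoid G]
    [AddCommMonoid V] [Module k V] [AddCommMonoid W] [Module k W] {ρ : Representation k G V}
    {σ : Representation k G W} (f : IntertwiningMap ρ σ) (x : MonoidAlgebra k G) (v : V) :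
    f (ρ.asAlgebraHom x v) = σ.asAlgebraHom x (f v) := by
  induction x using MonoidAlgebra.induction_linear with
  | zero => simp
  | add x y hx hy => simp [hx, hy]
  | single g a => simp [f.isIntertwining]

section Group

variable {k G V W : Type*} [Field k] [Group G] [Fintype G] [AddCommGroup V] [Module k V]
  [AddCommGroup W] [Module k W]

theorem sum_eq_zero_of_invariants_eq_bot [Invertible (Fintype.card G : k)]
    (ρ : Representation k G V) (h : ρ.invariants = ⊥) : ∑ g, ρ g = 0 := by
  have hav : ⅟(Fintype.card G : k) • ∑ g, ρ g = 0 := by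
    simpa [averageMap, GroupAlgebra.average, map_sum] using
      (LinearMap.ext fun v ↦ by simpa [h] using ρ.averageMap_invariant v : ρ.averageMap = 0)
  exact (isUnit_of_invertible _).smul_eq_zero.mp hav

/-- The summand is the character of `G × G` acting on `V →ₗ[k] W` by `f ↦ σ a ∘ f ∘ ρ b⁻¹`,
evaluated at `(a * g, g)`, and `(a * g, g) = (a, 1) * (g, g)`. -/
theorem sum_character_inv_mul_character_mul_eq_zero [Invertible (Fintype.card G : k)]
    [FiniteDimensional k V] [FiniteDimensional k W]
    (ρ : Representation k G V) (σ : Representation k G W)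
    (h : (linHom ρ σ).invariants = ⊥) (a : G) :
    ∑ g, ρ.character g⁻¹ * σ.character (a * g) = 0 := by
  let τ := linHom (ρ.comp (MonoidHom.snd G G)) (σ.comp (MonoidHom.fst G G))
  have hτ : ∀ g, ρ.character g⁻¹ * σ.character (a * g) =
      LinearMap.trace k _ (τ (a, 1) * linHom ρ σ g) := fun g ↦ by
    have : τ (a, 1) * linHom ρ σ g = τ (a * g, g) := by
      change τ (a, 1) * τ (g, g) = _
      rw [← map_mul, Prod.mk_mul_mk, one_mul]
    rw [this, ← character, char_linHom]
    rfl
  rw [Finset.sum_congr rfl fun g _ ↦ hτ g, ← map_sum, ← Finset.mul_sum,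
    sum_eq_zero_of_invariants_eq_bot _ h, mul_zero, map_zero]

end Group

theorem sum_smul_eq_zero_of_trace_mul_eq_zero {𝕜 G V : Type*} [RCLike 𝕜] [Group G] [Fintype G]
    [AddCommGroup V] [Module 𝕜 V] [FiniteDimensional 𝕜 V] (ρ : Representation 𝕜 G V)
    {v : G → 𝕜} (h : ∀ a, LinearMap.trace 𝕜 V (ρ a * ∑ b, v b • ρ b) = 0) :
    ∑ b, v b • ρ b = 0 := by
  let e := LinearMap.toMatrixAlgEquiv (Module.finBasis 𝕜 V)
  have he : ∀ a, Matrix.trace (e (ρ a * ∑ b, v b • ρ b)) = 0 := fun a ↦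
    (LinearMap.trace_eq_matrix_trace 𝕜 _ _).symm.trans (h a)
  apply e.injective
  simpa [map_sum] using Matrix.sum_smul_eq_zero_of_trace_mul_eq_zero
    (e.toMulEquiv.toMonoidHom.comp ρ) (v := v) fun a ↦ by simpa [map_sum] using he a

end Representation

namespace FDRep

theorem simple_of_isIrreducible {k G V : Type u} [Field k] [Monoid G] [AddCommGroup V]
    [Module k V] [FiniteDimensional k V] (ρ : Representation k G V) [ρ.IsIrreducible] :
    Simple (FDRep.of ρ) := by
  have : Simple ((forget₂ (FDRep k G) (Rep k G)).obj (FDRep.of ρ)) := by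
    rw [← simple_obj_iff Rep.toModuleMonoidAlgebra, simple_iff_isSimpleModule']
    exact (irreducible_iff_isSimpleModule_asModule ρ).mp inferInstance
  exact Functor.simple_of_simple_obj (forget₂ (FDRep k G) (Rep k G)) _

noncomputable def homEquivIntertwiningMap {k G : Type*} [Field k] [Group G] (X Y : FDRep k G) :
    (X ⟶ Y) ≃ₗ[k] IntertwiningMap X.ρ Y.ρ :=
  (linHom.invariantsEquivFDRepHom X Y).symm ≪≫ₗ invariantsEquivIntertwiningMap X.ρ Y.ρ

theorem sum_character_inv_mul_character_mul_eq_zero {k G : Type*} [Field k] [Group G]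
    [Fintype G] [Invertible (Fintype.card G : k)] {V W : FDRep k G} (h : ∀ f : V ⟶ W, f = 0)
    (a : G) : ∑ g, V.character g⁻¹ * W.character (a * g) = 0 := by
  have : Subsingleton (V ⟶ W) := ⟨fun f f' ↦ (h f).trans (h f').symm⟩
  have := (linHom.invariantsEquivFDRepHom V W).toEquiv.subsingleton
  exact Representation.sum_character_inv_mul_character_mul_eq_zero V.ρ W.ρ
    Submodule.eq_bot_of_subsingleton a

theorem asAlgebraHom_injective {k G : Type u} [Field k] [Group G] [Fintype G]
    [NeZero (Nat.card G : k)] (W : FDRep k G)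
    (hW : ∀ V : FDRep k G, Simple V → ∃ f : V ⟶ W, f ≠ 0) :
    Function.Injective (asAlgebraHom W.ρ) := by
  refine (injective_iff_map_eq_zero _).mpr fun x hx ↦
    eq_zero_of_mem_annihilator_of_isSimpleModule fun S _ ↦ ?_
  have : (ofModule' (k := k) (G := G) S).IsIrreducible := isIrreducible_ofModule'
  obtain ⟨f, hf⟩ := hW _ (simple_of_isIrreducible (ofModule' (k := k) (G := G) S))
  set φ : IntertwiningMap (ofModule' S) W.ρ := homEquivIntertwiningMap _ _ f
  have hφ : Function.Injective φ := (IsIrreducible.injective_or_eq_zero φ).resolve_right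
    ((map_ne_zero_iff _ (homEquivIntertwiningMap _ _).injective).mpr hf)
  refine Submodule.mem_annihilator.mpr fun s hs ↦
    congrArg Subtype.val (?_ : x • (⟨s, hs⟩ : S) = 0)
  apply hφ
  rw [← asAlgebraHom_ofModule', map_zero]
  exact (φ.map_asAlgebraHom_apply x _).trans (by rw [hx]; simp)

theorem linearIndependent_ρ {k G : Type u} [Field k] [Group G] [Fintype G]
    [NeZero (Nat.card G : k)] (W : FDRep k G)
    (hW : ∀ V : FDRep k G, Simple V → ∃ f : V ⟶ W, f ≠ 0) : LinearIndependent k W.ρ := by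
  have := (MonoidAlgebra.basis G k).linearIndependent.map' (asAlgebraHom W.ρ).toLinearMap
    (LinearMap.ker_eq_bot.mpr (asAlgebraHom_injective W hW))
  have hρ : (asAlgebraHom W.ρ).toLinearMap ∘ MonoidAlgebra.basis G k = W.ρ := by
    ext g : 1
    simp
  rwa [hρ] at this

theorem mulVec_of_character_mul {k G : Type*} [Field k] [Group G] [Fintype G]
    (W : FDRep k G) (v : G → k) (a : G) :
    ((Matrix.of fun a b : G ↦ W.character (a * b)) *ᵥ v) a =
      LinearMap.trace k W (W.ρ a * ∑ b, v b • W.ρ b) := by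
  simp [Matrix.mulVec, dotProduct, Finset.mul_sum, map_sum, character, mul_comm]

end FDRep

/-- The bilinear form `K_W(a,b) = χ_W(ab)` on `ℂG` is nondegenerate iff every
irreducible complex representation of `G` occurs in `W` with positive
multiplicity. -/
theorem stmt_6 {G : Type} [Group G] [Fintype G] [DecidableEq G]
    (W : FDRep ℂ G) :
    Matrix.det (Matrix.of fun a b : G => W.character (a * b)) ≠ 0 ↔
      ∀ V : FDRep ℂ G, Simple V → ∃ f : V ⟶ W, f ≠ 0 := by
  rw [Ne, ← Matrix.exists_mulVec_eq_zero_iff]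
  constructor
  · intro hK V hV
    by_contra! hVW
    have hG : (Fintype.card G : ℂ) ≠ 0 := Nat.cast_ne_zero.mpr Fintype.card_ne_zero
    have := invertibleOfNonzero hG
    refine hK ⟨fun b ↦ V.character b⁻¹, fun h0 ↦ ?_, funext fun a ↦ ?_⟩
    · have hnorm := (FDRep.simple_iff_char_is_norm_one V).mp hV
      simp only [funext_iff, Pi.zero_apply] at h0
      simp [h0] at hnorm
      exact hG hnorm.symm
    · simpa [Matrix.mulVec, dotProduct, mul_comm] using
        FDRep.sum_character_inv_mul_character_mul_eq_zero hVW a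
  · rintro hW ⟨v, hv0, hv⟩
    refine hv0 (funext (Fintype.linearIndependent_iff.mp (FDRep.linearIndependent_ρ W hW) v ?_))
    exact Representation.sum_smul_eq_zero_of_trace_mul_eq_zero W.ρ fun a ↦
      (FDRep.mulVec_of_character_mul W v a).symm.trans (congrFun hv a)
end

section
/- Let G be a finite group for which every complex irreducible representation of G occurs in the conjugation representation ℂG. Then the Killing form K(x_a, x_b) = |Z(ab) ∩ (G \ {e})| on ℂ.(G \ {e}) is nondegenerate. -/
/-!
Roth's property makes `ℂG` a faithful module over the group algebra `ℂ[G]`: every simple left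
ideal `S` of `ℂ[G]` admits a nonzero, hence injective, intertwiner `S → ℂG`, so an element of
`ℂ[G]` acting trivially on `ℂG` kills every simple left ideal and therefore, by Maschke, all of
`ℂ[G]`. Hence the conjugation matrices `ρ(a)`, `a ∈ G`, are linearly independent.

With `n = |G|` and `J` the all-ones matrix, put `Y_a = ρ(a) - J/n` for `a ≠ e`. As `ρ(a)` is a
permutation matrix, the Frobenius product is `⟨Y_a, Y_{b⁻¹}⟩ = |Z(ab)| - 1 = K(x_a, x_b)`, so up to
the column permutation `b ↦ b⁻¹` the Killing matrix is the Gram matrix of the `Y_a`. The entry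
`(e, b)`, `b ≠ e`, vanishes on every `ρ(a)` but not on `J`, so a linear relation among the `Y_a`
is one among the `ρ(a)`; the `Y_a` are independent, their Gram matrix is positive definite and
`det K ≠ 0`.
-/

open CategoryTheory

/-- The conjugation representation of a finite group `G` on `ℂG`
(realised as functions `G → ℂ`). -/
def conjRep (G : Type) [Group G] : Representation ℂ G (G → ℂ) where
  toFun g :=
    { toFun := fun f x => f (g⁻¹ * x * g)
      map_add' := fun _ _ => rfl
      map_smul' := fun _ _ => rfl }
  map_one' := by
    ext f x
    simp
  map_mul' g h := by
    ext f x
    simp [mul_assoc]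

open scoped MonoidAlgebra
open Matrix

theorem eq_zero_of_forall_isSimpleModule_smul_eq_zero {R : Type*} [Ring R]
    [IsSemisimpleModule R R] {r : R}
    (h : ∀ S : Submodule R R, IsSimpleModule R S → ∀ s ∈ S, r • s = 0) : r = 0 := by
  have hr : r ∈ (⊤ : Submodule R R).annihilator := by
    rw [← IsSemisimpleModule.sSup_simples_eq_top R R, sSup_eq_iSup', Submodule.annihilator_iSup,
      Submodule.mem_iInf]
    exact fun S => Submodule.mem_annihilator.2 (h S.1 S.2)
  simpa using Submodule.mem_annihilator.1 hr 1 trivial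

theorem Representation.asAlgebraHom_ofModule'_apply {k G : Type*} [Field k] [Monoid G]
    {M : Type*} [AddCommGroup M] [Module k M] [Module k[G] M] [IsScalarTower k k[G] M]
    (x : k[G]) (m : M) : asAlgebraHom (ofModule' M) x m = x • m := by
  rw [asAlgebraHom_def, ofModule', (MonoidAlgebra.lift k (M →ₗ[k] M) G).apply_symm_apply]
  rfl

universe u

namespace FDRep

section Monoid

variable {k G : Type u} [Field k] [Monoid G]

theorem injective_of_mono {V W : FDRep k G} (f : V ⟶ W) [Mono f] :
    Function.Injective f.hom.hom :=
  (Rep.mono_iff_injective ((forget₂ (FDRep k G) (Rep k G)).map f)).1 inferInstance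

theorem hom_comm_apply {V W : FDRep k G} (f : V ⟶ W) (g : G) (v : V) :
    f.hom.hom (V.ρ g v) = W.ρ g (f.hom.hom v) :=
  LinearMap.congr_fun (congrArg (fun φ => φ.hom.hom) (f.comm g)) v

theorem hom_asAlgebraHom_apply {V W : FDRep k G} (f : V ⟶ W) (x : k[G]) (v : V) :
    f.hom.hom (Representation.asAlgebraHom V.ρ x v) =
      Representation.asAlgebraHom W.ρ x (f.hom.hom v) := by
  induction x using MonoidAlgebra.induction_on with
  | of g => simp [hom_comm_apply]
  | add x y hx hy => simp [hx, hy]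
  | smul c x hx => simp [hx]

instance simple_of_ofModule' (M : Type u) [AddCommGroup M] [Module k M] [Module k[G] M]
    [IsScalarTower k k[G] M] [FiniteDimensional k M] [IsSimpleModule k[G] M] :
    Simple (FDRep.of (Representation.ofModule' (k := k) (G := G) M)) where
  mono_isIso_iff_nonzero {Y} f _ := by
    have : Nontrivial M := IsSimpleModule.nontrivial k[G] M
    have ne_zero_of_surjective : Function.Surjective f.hom.hom → f ≠ 0 := by
      rintro hf rfl
      obtain ⟨m, hm⟩ := exists_ne (0 : M)
      obtain ⟨y, rfl⟩ := hf m
      exact hm rfl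
    let range : Submodule k[G] M := MonoidAlgebra.submoduleOfSMulMem
      (LinearMap.range f.hom.hom.hom) (by rintro g _ ⟨y, rfl⟩; exact ⟨Y.ρ g y, hom_comm_apply f g y⟩)
    rw [ConcreteCategory.isIso_iff_bijective]
    rcases IsSimpleOrder.eq_bot_or_eq_top range with h | h
    · have hf : f = 0 := by
        ext y
        have hy : f.hom.hom y ∈ range := ⟨y, rfl⟩
        rw [h] at hy
        exact (Submodule.mem_bot k[G]).1 hy
      exact iff_of_false (fun hb => ne_zero_of_surjective hb.2 hf) (not_not.2 hf)
    · have hsurj : Function.Surjective f.hom.hom := fun m => (h ▸ Submodule.mem_top : m ∈ range)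
      exact iff_of_true ⟨injective_of_mono f, hsurj⟩ (ne_zero_of_surjective hsurj)

end Monoid

variable {k G : Type u} [Field k] [Group G] [Finite G] [NeZero (Nat.card G : k)]

theorem asAlgebraHom_injective_of_forall_simple (V : FDRep k G)
    (hV : ∀ W : FDRep k G, Simple W → ∃ f : W ⟶ V, f ≠ 0) :
    Function.Injective (Representation.asAlgebraHom V.ρ) := by
  refine (injective_iff_map_eq_zero _).2 fun x hx => ?_
  refine eq_zero_of_forall_isSimpleModule_smul_eq_zero fun S _ s hs => ?_
  obtain ⟨f, hf⟩ := hV _ (simple_of_ofModule' S)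
  have := mono_of_nonzero_from_simple hf
  have h := hom_asAlgebraHom_apply f x ⟨s, hs⟩
  rw [hx, LinearMap.zero_apply] at h
  have h' := injective_of_mono f (h.trans (map_zero _).symm)
  rw [of_ρ', Representation.asAlgebraHom_ofModule'_apply] at h'
  simpa using congrArg Subtype.val h'

theorem linearIndependent_ρ_of_forall_simple (V : FDRep k G)
    (hV : ∀ W : FDRep k G, Simple W → ∃ f : W ⟶ V, f ≠ 0) :
    LinearIndependent k V.ρ := by
  have := (MonoidAlgebra.basis G k).linearIndependent.map'
    (Representation.asAlgebraHom V.ρ).toLinearMap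
    (LinearMap.ker_eq_bot.2 (asAlgebraHom_injective_of_forall_simple V hV))
  have hρ : ⇑(Representation.asAlgebraHom V.ρ).toLinearMap ∘ ⇑(MonoidAlgebra.basis G k) = V.ρ := by
    ext g : 1
    simp
  rwa [hρ] at this

end FDRep

theorem LinearIndependent.sub_const {ι K V : Type*} [Fintype ι] [Field K] [AddCommGroup V]
    [Module K V] {v : ι → V} (hv : LinearIndependent K v) {w : V} (φ : V →ₗ[K] K)
    (hφv : ∀ i, φ (v i) = 0) (hφw : φ w ≠ 0) : LinearIndependent K (fun i => v i - w) := by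
  rw [Fintype.linearIndependent_iff] at hv ⊢
  intro c hc
  simp only [smul_sub, Finset.sum_sub_distrib, ← Finset.sum_smul] at hc
  have hsum : ∑ i, c i = 0 := by
    simpa [hφv, hφw] using congrArg φ hc
  exact hv c (by simpa [hsum] using hc)

theorem sum_centered_indicator_mul {ι K : Type*} [Fintype ι] [DecidableEq ι] [Field K]
    [CharZero K] (t s : ι) :
    ∑ i, ((if t = i then (1 : K) else 0) - (Fintype.card ι : K)⁻¹) *
        ((if s = i then 1 else 0) - (Fintype.card ι : K)⁻¹) =
      (if t = s then 1 else 0) - (Fintype.card ι : K)⁻¹ := by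
  have : Nonempty ι := ⟨t⟩
  have : (Fintype.card ι : K) ≠ 0 := Nat.cast_ne_zero.2 Fintype.card_ne_zero
  simp [sub_mul, mul_sub, Finset.sum_sub_distrib, ite_mul]

section Conjugation

variable {G : Type} [Group G]

theorem inv_mul_mul_eq_mul_mul_inv_iff (a b x : G) :
    a⁻¹ * x * a = b * x * b⁻¹ ↔ x * (a * b) = a * b * x := by
  rw [mul_assoc, inv_mul_eq_iff_eq_mul, ← mul_assoc, ← mul_assoc, eq_mul_inv_iff_mul_eq]
  simp only [mul_assoc]

def invNeOne : {a : G // a ≠ 1} ≃ {a : G // a ≠ 1} :=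
  (Equiv.inv G).subtypeEquiv fun _ => inv_ne_one.symm

@[simp]
theorem coe_invNeOne (a : {a : G // a ≠ 1}) : (invNeOne a : G) = (a : G)⁻¹ := rfl

variable [Fintype G] [DecidableEq G]

theorem linearIndependent_conjMatrix (h : LinearIndependent ℂ (conjRep G)) :
    LinearIndependent ℂ fun (a : G) (p : G × G) => if a⁻¹ * p.1 * a = p.2 then (1 : ℂ) else 0 := by
  let e := LinearMap.toMatrix'.trans (LinearEquiv.curry ℂ ℂ G G).symm
  have he : (fun (a : G) (p : G × G) => if a⁻¹ * p.1 * a = p.2 then (1 : ℂ) else 0) =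
      e ∘ conjRep G := by
    ext a ⟨x, y⟩
    change _ = LinearMap.toMatrix' (conjRep G a) x y
    simp [LinearMap.toMatrix'_apply, conjRep, Pi.single_apply]
  rw [he]
  exact h.map' _ e.ker

noncomputable def centeredConjMatrix : Matrix {a : G // a ≠ 1} (G × G) ℂ :=
  of fun a p => (if (a : G)⁻¹ * p.1 * a = p.2 then 1 else 0) - (Fintype.card G : ℂ)⁻¹

theorem linearIndependent_row_centeredConjMatrix (h : LinearIndependent ℂ (conjRep G)) :
    LinearIndependent ℂ (centeredConjMatrix (G := G)).row := by
  rcases isEmpty_or_nonempty {a : G // a ≠ 1} with _ | ⟨b, hb⟩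
  · exact linearIndependent_empty_type
  refine ((linearIndependent_conjMatrix h).comp _ Subtype.val_injective).sub_const
    (LinearMap.proj (1, b)) (fun a => ?_) (by simp)
  simpa [eq_comm] using hb

noncomputable def centeredConjGram : Matrix {a : G // a ≠ 1} {a : G // a ≠ 1} ℂ :=
  centeredConjMatrix (G := G) * (centeredConjMatrix (G := G))ᴴ

open scoped ComplexOrder in
theorem det_centeredConjGram_ne_zero (h : LinearIndependent ℂ (conjRep G)) :
    (centeredConjGram (G := G)).det ≠ 0 :=
  (PosDef.mul_conjTranspose_self _
    (vecMul_injective_iff.2 (linearIndependent_row_centeredConjMatrix h))).det_pos.ne'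

theorem killing_eq_centeredConjGram_submatrix :
    (Matrix.of fun a b : {x : G // x ≠ 1} =>
      ((Finset.univ.filter fun h : G => h ≠ 1 ∧ h * ((a : G) * b) = ((a : G) * b) * h).card : ℂ)) =
      centeredConjGram.submatrix id invNeOne := by
  ext a b
  have hcard : (Finset.univ.filter fun h : G => h ≠ 1 ∧ h * (a * b) = a * b * h) =
      (Finset.univ.filter fun h : G => h * (a * b) = a * b * h).erase 1 := by
    ext h
    simp [and_comm]
  rw [of_apply, hcard, Finset.cast_card_erase_of_mem (by simp), submatrix_apply, centeredConjGram,
    mul_apply, Fintype.sum_prod_type]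
  simp only [conjTranspose_apply, centeredConjMatrix, of_apply]
  simp [sum_centered_indicator_mul, inv_mul_mul_eq_mul_mul_inv_iff]

end Conjugation

/-- If every complex irreducible representation of `G` occurs in the
conjugation representation (the Roth property), then the Killing form
`K(a,b) = |Z(ab) ∩ (G \ {e})|` of the universal calculus is nondegenerate. -/
theorem stmt_10 {G : Type} [Group G] [Fintype G] [DecidableEq G]
    (hRoth : ∀ V : FDRep ℂ G, Simple V → ∃ f : V ⟶ FDRep.of (conjRep G), f ≠ 0) :
    Matrix.det (Matrix.of fun a b : {x : G // x ≠ 1} =>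
      ((Finset.univ.filter fun h : G =>
        h ≠ 1 ∧ h * ((a : G) * b) = ((a : G) * b) * h).card : ℂ)) ≠ 0 := by
  have hli : LinearIndependent ℂ (conjRep G) :=
    FDRep.linearIndependent_ρ_of_forall_simple (FDRep.of (conjRep G)) hRoth
  rw [killing_eq_centeredConjGram_submatrix, det_permute']
  exact mul_ne_zero (Int.cast_ne_zero.2 (Units.ne_zero _)) (det_centeredConjGram_ne_zero hli)
end

section
/- Let G be a finite group and C a conjugacy class of G not containing e. Then the column sums of the Killing form matrix K(a,b) = |Z(ab) ∩ C| are all equal; equivalently, the vector θ = Σ_{a∈C} x_a is an eigenvector of K with eigenvalue Σ_{a∈C} |Z(ab) ∩ C| (independent of b ∈ C). -/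
/-! Conjugation by `g` permutes `C` and carries the centraliser of `t` onto that of `g t g⁻¹`,
so both `|Z(t) ∩ C|` and the column sum `b ↦ Σ_{a ∈ C} |Z(ab) ∩ C|` are constant on
conjugacy classes; as `C` is a single class, the column sums all equal the one at `x`. -/

open Finset

section ConjInvariant

variable {G : Type*} [Group G] [DecidableEq G] {C : Finset G}

theorem card_filter_commute_conj (hC : ∀ g, ∀ a ∈ C, g * a * g⁻¹ ∈ C) (g t : G) :
    #(C.filter fun h => h * (g * t * g⁻¹) = g * t * g⁻¹ * h) =
      #(C.filter fun h => h * t = t * h) := by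
  refine card_nbij' (fun h => g⁻¹ * h * g) (fun h => g * h * g⁻¹) ?_ ?_ ?_ ?_
  · intro h hh
    simp only [coe_filter, Set.mem_ofPred_eq] at hh ⊢
    refine ⟨by simpa using hC g⁻¹ h hh.1, (Commute.conj_iff g).1 ?_⟩
    rw [show g * (g⁻¹ * h * g) * g⁻¹ = h by group]
    exact hh.2
  · intro h hh
    simp only [coe_filter, Set.mem_ofPred_eq] at hh ⊢
    exact ⟨hC g h hh.1, (Commute.conj_iff g).2 hh.2⟩
  · intro h _; group
  · intro h _; group

theorem sum_card_filter_commute_mul_conj (hC : ∀ g, ∀ a ∈ C, g * a * g⁻¹ ∈ C) (g b : G) :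
    ∑ a ∈ C, #(C.filter fun h => h * (a * (g * b * g⁻¹)) = a * (g * b * g⁻¹) * h) =
      ∑ a ∈ C, #(C.filter fun h => h * (a * b) = a * b * h) := by
  refine sum_nbij' (fun a => g⁻¹ * a * g) (fun a => g * a * g⁻¹)
    (fun a ha => by simpa using hC g⁻¹ a ha) (fun a ha => hC g a ha)
    (fun a _ => by group) (fun a _ => by group) fun a _ => ?_
  have hconj : a * (g * b * g⁻¹) = g * (g⁻¹ * a * g * b) * g⁻¹ := by group
  rw [hconj, card_filter_commute_conj hC]

end ConjInvariant

theorem stmt_13_general {G : Type*} [Group G] [DecidableEq G]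
    (x : G) (C : Finset G) (hC : ∀ a, a ∈ C ↔ IsConj x a) :
    ∃ c : ℕ,
      (∀ b ∈ C, ∑ a ∈ C, (C.filter fun h => h * (a * b) = (a * b) * h).card = c) ∧
      Matrix.vecMul (fun _ => (1 : ℝ))
        (Matrix.of fun a b : C =>
          ((C.filter fun h => h * ((a : G) * b) = ((a : G) * b) * h).card : ℝ))
        = fun _ => (c : ℝ) := by
  have hCconj : ∀ g, ∀ a ∈ C, g * a * g⁻¹ ∈ C := fun g a ha =>
    (hC _).2 (((hC a).1 ha).trans (isConj_iff.2 ⟨g, rfl⟩))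
  have hcol : ∀ b ∈ C, ∑ a ∈ C, #(C.filter fun h => h * (a * b) = a * b * h) =
      ∑ a ∈ C, #(C.filter fun h => h * (a * x) = a * x * h) := by
    intro b hb
    obtain ⟨g, rfl⟩ := isConj_iff.1 ((hC b).1 hb)
    exact sum_card_filter_commute_mul_conj hCconj g x
  refine ⟨_, hcol, funext fun b => ?_⟩
  simp only [Matrix.vecMul, dotProduct, Matrix.of_apply, one_mul]
  rw [← hcol b b.2, Nat.cast_sum, ← sum_coe_sort C]

/-- For a conjugacy class `C` not containing `e`, all column sums of the
Killing form matrix `K(a,b) = |Z(ab) ∩ C|` are equal; equivalently the vector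
`θ = Σ_a x_a` (all-ones) is an eigenvector of `K` with that common sum as
eigenvalue. -/
theorem stmt_13 {G : Type*} [Group G] [Fintype G] [DecidableEq G]
    (x : G) (hx : x ≠ 1) (C : Finset G) (hC : ∀ a, a ∈ C ↔ IsConj x a) :
    ∃ c : ℕ,
      (∀ b ∈ C, ∑ a ∈ C, (C.filter fun h => h * (a * b) = (a * b) * h).card = c) ∧
      Matrix.vecMul (fun _ => (1 : ℝ))
        (Matrix.of fun a b : C =>
          ((C.filter fun h => h * ((a : G) * b) = ((a : G) * b) * h).card : ℝ))
        = fun _ => (c : ℝ) :=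
  stmt_13_general x C hC
end

section
/- For the 2-cycles conjugacy class C of S_n (n > 2), the Killing form matrix K(a,b) = |Z(ab) ∩ C| is positive definite; its eigenvalue on the trivial component is (n⁴ − 10n³ + 41n² − 72n + 48)/4, on the standard representation component is n² − 6n + 12, and (for n > 3) on the S^{(n-2,2)} component is 2n. -/
/-!
A transposition `(x y)` commutes with `g` iff `g` fixes `x` and `y` or swaps them, i.e. iff it is
disjoint from `g` or is one of the 2-cycles of `g`. So `g` commutes with `C(#fix g, 2)` plus
(number of 2-cycles of `g`) transpositions, which for a product `ab` of transpositions is `C(n,2)`,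
`C(n-3,2)` or `C(n-4,2) + 2` according as `a = b`, `a` and `b` share one point, or are disjoint.
With `B` the point–transposition incidence matrix, `J` the all-ones matrix and
`z = (n-4)(n-5)/2 + 2`, this is the identity `K = 2n I + z J + (n-6) BᵀB`, and the eigenvalues
follow from `BBᵀ = (n-2) I + J` and from `B` having row sums `n - 1` and column sums `2`.

For positivity, `h` commutes with `ab` iff `aha = bhb` (as `a² = b² = 1`), so `K = GᵀG` where
`G((h,k), a) = [h transposition, aha = k]`. `G` is injective for `n > 2`: the transposition
`(p q)` is the only one conjugating `(p z)` to `(q z)`.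
-/

instance (n : ℕ) : DecidablePred fun σ : Equiv.Perm (Fin n) => σ.IsSwap := fun σ =>
  decidable_of_iff (∃ x y, x ≠ y ∧ σ = Equiv.swap x y) Iff.rfl

open Finset Matrix

theorem commute_mul_iff_conj_eq_conj {G : Type*} [Group G] {a b h : G} (ha : a * a = 1)
    (hb : b * b = 1) : Commute h (a * b) ↔ a * h * a = b * h * b := by
  constructor
  · intro e
    calc a * h * a = a * (h * (a * b)) * b := by simp only [mul_assoc, hb, mul_one]
      _ = a * (a * b * h) * b := by rw [e.eq]
      _ = (a * a) * b * h * b := by simp only [mul_assoc]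
      _ = b * h * b := by rw [ha, one_mul]
  · intro e
    calc h * (a * b) = (a * a) * h * (a * b) := by rw [ha, one_mul]
      _ = a * (a * h * a) * b := by simp only [mul_assoc]
      _ = a * (b * h * b) * b := by rw [e]
      _ = a * b * h * (b * b) := by simp only [mul_assoc]
      _ = a * b * h := by rw [hb, mul_one]

namespace Equiv.Perm

local notation "Swaps" α => {σ : Equiv.Perm α // Equiv.Perm.IsSwap σ}

variable {α : Type*} [DecidableEq α]

theorem swap_eq_swap_iff {x y u v : α} (hxy : x ≠ y) :
    swap x y = swap u v ↔ (x = u ∧ y = v) ∨ (x = v ∧ y = u) := by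
  constructor
  · intro h
    have hx := congrArg (· x) h
    have hy := congrArg (· y) h
    simp only [swap_apply_left, swap_apply_right, swap_apply_def] at hx hy
    grind
  · rintro (⟨rfl, rfl⟩ | ⟨rfl, rfl⟩)
    · rfl
    · exact swap_comm _ _

theorem commute_swap_iff {x y : α} (hxy : x ≠ y) (g : Perm α) :
    Commute (swap x y) g ↔ (g x = x ∧ g y = y) ∨ (g x = y ∧ g y = x) := by
  rw [← swap_eq_swap_iff (g.injective.ne hxy), swap_apply_apply, eq_comm, eq_mul_inv_iff_mul_eq,
    commute_iff_eq]

theorem IsSwap.mul_self {a : Perm α} (ha : a.IsSwap) : a * a = 1 := by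
  obtain ⟨x, y, -, rfl⟩ := ha
  exact swap_mul_self x y

variable [Fintype α]

theorem IsSwap.eq_swap_of_mem_support {a : Perm α} (ha : a.IsSwap) {i : α}
    (hi : i ∈ a.support) : a = swap i (a i) := by
  obtain ⟨x, y, hxy, rfl⟩ := ha
  rw [support_swap hxy, mem_insert, mem_singleton] at hi
  rcases hi with rfl | rfl
  · rw [swap_apply_left]
  · rw [swap_apply_right, swap_comm]

theorem IsSwap.eq_of_support_eq {a b : Perm α} (ha : a.IsSwap) (hb : b.IsSwap)
    (hab : a.support = b.support) : a = b := by
  obtain ⟨x, y, hxy, rfl⟩ := ha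
  have hx : x ∈ b.support := hab ▸ by simp [support_swap hxy]
  have hy : y ∈ b.support := hab ▸ by simp [support_swap hxy]
  rw [hb.eq_swap_of_mem_support hx] at hy ⊢
  rw [support_swap (mem_support.1 hx).symm, mem_insert, mem_singleton] at hy
  rw [hy.resolve_left hxy.symm]

theorem isSwap_and_mem_support_iff {a : Perm α} {i : α} :
    a.IsSwap ∧ i ∈ a.support ↔ ∃ j, j ≠ i ∧ swap i j = a := by
  constructor
  · rintro ⟨ha, hi⟩
    exact ⟨a i, mem_support.1 hi, (ha.eq_swap_of_mem_support hi).symm⟩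
  · rintro ⟨j, hji, rfl⟩
    exact ⟨⟨i, j, hji.symm, rfl⟩, by simp [support_swap hji.symm]⟩

theorem IsSwap.commute_iff {h : Perm α} (hh : h.IsSwap) (g : Perm α) :
    Commute h g ↔ Disjoint h g ∨ h ∈ g.cycleFactorsFinset := by
  obtain ⟨x, y, hxy, rfl⟩ := hh
  rw [commute_swap_iff hxy, mem_cycleFactorsFinset_iff, disjoint_iff_disjoint_support,
    support_swap hxy]
  simp only [Finset.disjoint_insert_left, Finset.disjoint_singleton_left, notMem_support,
    forall_mem_insert, swap_apply_left, isCycle_swap hxy, true_and]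
  grind

theorem IsSwap.eq_or_swap_mul_swap {a b : Perm α} (ha : a.IsSwap) (hb : b.IsSwap) :
    a = b ∨ (∃ t u v, t ≠ u ∧ t ≠ v ∧ u ≠ v ∧ a = swap t u ∧ b = swap t v) ∨
      ∃ p q r s, [p, q, r, s].Nodup ∧ a = swap p q ∧ b = swap r s := by
  by_cases hab : a = b
  · exact Or.inl hab
  right
  by_cases hdisj : _root_.Disjoint a.support b.support
  · right
    obtain ⟨p, q, hpq, rfl⟩ := ha
    obtain ⟨r, s, hrs, rfl⟩ := hb
    rw [support_swap hpq, support_swap hrs] at hdisj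
    refine ⟨p, q, r, s, ?_, rfl, rfl⟩
    simp only [Finset.disjoint_insert_left, Finset.disjoint_singleton_left, mem_insert,
      mem_singleton] at hdisj
    simp only [List.nodup_cons, List.mem_cons, List.not_mem_nil, List.nodup_nil]
    tauto
  · left
    obtain ⟨t, hta, htb⟩ := not_disjoint_iff.1 hdisj
    refine ⟨t, a t, b t, (mem_support.1 hta).symm, (mem_support.1 htb).symm, fun h => hab ?_,
      ha.eq_swap_of_mem_support hta, hb.eq_swap_of_mem_support htb⟩
    rw [ha.eq_swap_of_mem_support hta, hb.eq_swap_of_mem_support htb, h]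

theorem IsSwap.eq_swap_of_mul_swap_mul_eq {a : Perm α} (ha : a.IsSwap) {p q z : α} (hpq : p ≠ q)
    (hpz : p ≠ z) (h : a * swap p z * a = swap q z) : a = swap p q := by
  have hconj : swap (a p) (a z) = swap q z := by
    rw [swap_apply_apply, inv_eq_of_mul_eq_one_right ha.mul_self, h]
  rcases (swap_eq_swap_iff (a.injective.ne hpz)).1 hconj with ⟨hp, -⟩ | ⟨hp, hz⟩
  · rw [ha.eq_swap_of_mem_support (mem_support.2 (hp ▸ hpq.symm)), hp]
  · rw [ha.eq_swap_of_mem_support (mem_support.2 (hp ▸ hpz.symm)), hp, swap_apply_right] at hz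
    exact absurd hz hpq

variable (α) in
def swapIncidence : Matrix α (Swaps α) ℝ :=
  of fun i σ => if i ∈ σ.1.support then 1 else 0

theorem swapIncidence_transpose_mulVec_apply (v : α → ℝ) (σ : Swaps α) :
    ((swapIncidence α)ᵀ *ᵥ v) σ = ∑ i ∈ σ.1.support, v i := by
  simp only [mulVec, dotProduct, transpose_apply, swapIncidence, of_apply, ite_mul, one_mul,
    zero_mul]
  rw [sum_ite_mem, univ_inter]

theorem swapIncidence_transpose_mulVec_const (c : ℝ) :
    (swapIncidence α)ᵀ *ᵥ (fun _ => c) = fun _ => 2 * c := by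
  funext σ
  rw [swapIncidence_transpose_mulVec_apply, sum_const, card_support_eq_two.2 σ.2, nsmul_eq_mul,
    Nat.cast_ofNat]

variable [DecidablePred (IsSwap : Perm α → Prop)]

theorem card_isSwap_support_subset (s : Finset α) :
    #{h : Perm α | h.IsSwap ∧ h.support ⊆ s} = (#s).choose 2 := by
  rw [← card_powersetCard]
  refine card_bij (fun h _ => h.support) ?_ ?_ ?_
  · intro h hh
    rw [mem_filter] at hh
    exact mem_powersetCard.2 ⟨hh.2.2, card_support_eq_two.2 hh.2.1⟩
  · intro a ha b hb hab
    exact (mem_filter.1 ha).2.1.eq_of_support_eq (mem_filter.1 hb).2.1 hab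
  · intro t ht
    obtain ⟨hts, hcard⟩ := mem_powersetCard.1 ht
    obtain ⟨x, y, hxy, rfl⟩ := card_eq_two.1 hcard
    exact ⟨swap x y, mem_filter.2 ⟨mem_univ _, ⟨x, y, hxy, rfl⟩, support_swap hxy ▸ hts⟩,
      support_swap hxy⟩

theorem card_swaps : Fintype.card (Swaps α) = (Fintype.card α).choose 2 := by
  rw [Fintype.card_subtype, ← card_univ, ← card_isSwap_support_subset]
  simp only [subset_univ, and_true]

theorem card_filter_isSwap_cycleFactorsFinset (g : Perm α) :
    #{c ∈ g.cycleFactorsFinset | c.IsSwap} = g.cycleType.count 2 := by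
  rw [cycleType_def, Multiset.count_map, card_def, filter_val]
  congr 1
  exact Multiset.filter_congr fun c _ => by rw [Function.comp_apply, eq_comm, card_support_eq_two]

theorem card_isSwap_commute (g : Perm α) :
    #{h : Perm α | h.IsSwap ∧ h * g = g * h}
      = (Fintype.card α - #g.support).choose 2 + g.cycleType.count 2 := by
  have hsplit : ({h : Perm α | h.IsSwap ∧ h * g = g * h} : Finset (Perm α))
      = univ.filter (fun h : Perm α => h.IsSwap ∧ h.support ⊆ g.supportᶜ)
        ∪ {c ∈ g.cycleFactorsFinset | c.IsSwap} := by
    ext h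
    simp only [mem_union, mem_filter, mem_univ, true_and, subset_compl_iff_disjoint_right,
      ← disjoint_iff_disjoint_support]
    by_cases hh : h.IsSwap
    · simp only [hh, true_and, and_true]
      exact hh.commute_iff g
    · simp [hh]
  have hdisj : _root_.Disjoint (univ.filter fun h : Perm α => h.IsSwap ∧ h.support ⊆ g.supportᶜ)
      {c ∈ g.cycleFactorsFinset | c.IsSwap} := by
    refine disjoint_left.2 fun h hfix hcyc => ?_
    obtain ⟨-, hh, hsub⟩ := mem_filter.1 hfix
    obtain ⟨x, hx⟩ := card_pos.1 (card_support_eq_two.2 hh ▸ two_pos)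
    exact mem_compl.1 (hsub hx) (mem_cycleFactorsFinset_support_le (mem_filter.1 hcyc).1 hx)
  rw [hsplit, card_union_of_disjoint hdisj, card_isSwap_support_subset, card_compl,
    card_filter_isSwap_cycleFactorsFinset]

theorem card_isSwap_commute_mul {a b : Perm α} (ha : a.IsSwap) (hb : b.IsSwap) :
    (#{h : Perm α | h.IsSwap ∧ h * (a * b) = (a * b) * h} : ℝ)
      = (if a = b then 2 * (Fintype.card α : ℝ) else 0)
        + (((Fintype.card α : ℝ) - 4) * (Fintype.card α - 5) / 2 + 2)
        + (Fintype.card α - 6) * #(a.support ∩ b.support) := by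
  rw [card_isSwap_commute, ← sum_cycleType, Nat.cast_add, Nat.cast_choose_two,
    Nat.cast_sub (sum_cycleType_le _)]
  rcases ha.eq_or_swap_mul_swap hb with rfl | ⟨t, u, v, htu, htv, huv, rfl, rfl⟩ |
    ⟨p, q, r, s, hnodup, rfl, rfl⟩
  · simp [ha.mul_self, card_support_eq_two.2 ha]
    ring
  · have hne : swap t u ≠ swap t v := by
      rw [Ne, swap_eq_swap_iff htu]; tauto
    have hinter : {t, u} ∩ {t, v} = ({t} : Finset α) := by
      ext x; simp only [mem_inter, mem_insert, mem_singleton]; grind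
    simp [(isThreeCycle_swap_mul_swap_same htu htv huv).cycleType, hne, support_swap htu,
      support_swap htv, hinter]
    ring
  · have hdistinct := hnodup
    simp only [List.nodup_cons, List.mem_cons, List.not_mem_nil, List.nodup_nil] at hdistinct
    have hpq : p ≠ q := by grind
    have hrs : r ≠ s := by grind
    have hne : swap p q ≠ swap r s := by
      rw [Ne, swap_eq_swap_iff hpq]; grind
    have hinter : {p, q} ∩ {r, s} = (∅ : Finset α) := by
      ext x; simp only [mem_inter, mem_insert, mem_singleton]; grind
    rw [cycleType_swap_mul_swap_of_nodup hnodup, if_neg hne, support_swap hpq, support_swap hrs,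
      hinter]
    have hsum : ({2, 2} : Multiset ℕ).sum = 4 := rfl
    have hcount : ({2, 2} : Multiset ℕ).count 2 = 2 := rfl
    rw [hsum, hcount, card_empty]
    push_cast
    ring

theorem sum_swaps_mem_support (i : α) (f : Perm α → ℝ) :
    ∑ σ : Swaps α, (if i ∈ σ.1.support then f σ else 0) = ∑ j ∈ univ.erase i, f (swap i j) := by
  have himage : ({σ : Perm α | σ.IsSwap ∧ i ∈ σ.support} : Finset (Perm α))
      = (univ.erase i).image (swap i) := by
    ext σ
    simp only [mem_filter, mem_univ, true_and, isSwap_and_mem_support_iff, mem_image, mem_erase,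
      and_true]
  rw [← Finset.sum_subtype (univ.filter IsSwap) (by simp)
    (fun σ => if i ∈ σ.support then f σ else 0), sum_filter, ← sum_filter, ← sum_filter,
    filter_filter, himage, sum_image (swap_injective_of_left i).injOn]

theorem swapIncidence_mulVec_apply (w : (Swaps α) → ℝ) (i : α) :
    (swapIncidence α *ᵥ w) i = ∑ σ : Swaps α, if i ∈ σ.1.support then w σ else 0 := by
  simp [mulVec, dotProduct, swapIncidence, ite_mul]

theorem swapIncidence_mulVec_one :
    swapIncidence α *ᵥ (fun _ => 1) = fun _ => (Fintype.card α : ℝ) - 1 := by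
  funext i
  rw [swapIncidence_mulVec_apply, sum_swaps_mem_support i fun _ => 1, sum_const,
    card_erase_of_mem (mem_univ i), card_univ, nsmul_one,
    Nat.cast_pred (Fintype.card_pos_iff.2 ⟨i⟩)]

theorem swapIncidence_mulVec_transpose_mulVec (v : α → ℝ) :
    swapIncidence α *ᵥ ((swapIncidence α)ᵀ *ᵥ v)
      = fun i => ((Fintype.card α : ℝ) - 2) * v i + ∑ j, v j := by
  funext i
  simp only [swapIncidence_mulVec_apply, swapIncidence_transpose_mulVec_apply]
  rw [sum_swaps_mem_support i fun σ => ∑ j ∈ σ.support, v j]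
  have hpair : ∀ j ∈ univ.erase i, ∑ k ∈ (swap i j).support, v k = v i + v j := fun j hj => by
    have hij : i ≠ j := (ne_of_mem_erase hj).symm
    rw [support_swap hij, sum_pair hij]
  rw [sum_congr rfl hpair, sum_add_distrib, sum_const, card_erase_of_mem (mem_univ i), card_univ,
    nsmul_eq_mul, Nat.cast_pred (Fintype.card_pos_iff.2 ⟨i⟩), sum_erase_eq_sub (mem_univ i)]
  ring

theorem sum_swapIncidence_mulVec (w : (Swaps α) → ℝ) :
    ∑ i, (swapIncidence α *ᵥ w) i = 2 * ∑ σ, w σ := by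
  simp only [swapIncidence_mulVec_apply]
  rw [sum_comm, mul_sum]
  refine sum_congr rfl fun σ _ => ?_
  rw [sum_ite_mem, univ_inter, sum_const, card_support_eq_two.2 σ.2, nsmul_eq_mul, Nat.cast_ofNat]

theorem sum_swapIncidence_transpose_mulVec (v : α → ℝ) :
    ∑ σ, ((swapIncidence α)ᵀ *ᵥ v) σ = ((Fintype.card α : ℝ) - 1) * ∑ i, v i := by
  have hrow := congrFun (swapIncidence_mulVec_one (α := α))
  simp only [mulVec, dotProduct, transpose_apply, mul_one] at hrow ⊢
  rw [sum_comm, mul_sum]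
  refine sum_congr rfl fun i _ => ?_
  rw [← sum_mul, hrow, mul_comm]

variable (α) in
def swapKillingMatrix : Matrix (Swaps α) (Swaps α) ℝ :=
  of fun a b => (#{h : Perm α | h.IsSwap ∧ h * (a.1 * b.1) = (a.1 * b.1) * h} : ℝ)

theorem swapKillingMatrix_eq :
    swapKillingMatrix α = (2 * Fintype.card α : ℝ) • 1
      + (((Fintype.card α : ℝ) - 4) * (Fintype.card α - 5) / 2 + 2) • of (fun _ _ => 1)
      + ((Fintype.card α : ℝ) - 6) • ((swapIncidence α)ᵀ * swapIncidence α) := by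
  ext a b
  have hinter : ((swapIncidence α)ᵀ * swapIncidence α) a b = #(a.1.support ∩ b.1.support) := by
    simp only [Matrix.mul_apply, transpose_apply, swapIncidence, of_apply, ite_mul, one_mul,
      zero_mul, ← ite_and, ← mem_inter]
    rw [sum_boole, filter_mem_eq_inter, univ_inter]
  simp only [swapKillingMatrix, of_apply, card_isSwap_commute_mul a.2 b.2, Matrix.add_apply,
    Matrix.smul_apply, Matrix.one_apply, hinter, Subtype.ext_iff, smul_eq_mul]
  split_ifs <;> ring

theorem swapKillingMatrix_mulVec (w : (Swaps α) → ℝ) :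
    swapKillingMatrix α *ᵥ w = fun a => 2 * Fintype.card α * w a
      + (((Fintype.card α : ℝ) - 4) * (Fintype.card α - 5) / 2 + 2) * ∑ b, w b
      + ((Fintype.card α : ℝ) - 6) * ((swapIncidence α)ᵀ *ᵥ (swapIncidence α *ᵥ w)) a := by
  have hJ : (of fun _ _ => 1 : Matrix (Swaps α) (Swaps α) ℝ) *ᵥ w = fun _ => ∑ b, w b := by
    ext; simp [mulVec, dotProduct]
  rw [swapKillingMatrix_eq, add_mulVec, add_mulVec, smul_mulVec, smul_mulVec, smul_mulVec,
    one_mulVec, ← mulVec_mulVec, hJ]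
  rfl

theorem swapKillingMatrix_mulVec_one :
    swapKillingMatrix α *ᵥ (fun _ => 1) = fun _ => ((Fintype.card α : ℝ) ^ 4
      - 10 * Fintype.card α ^ 3 + 41 * Fintype.card α ^ 2 - 72 * Fintype.card α + 48) / 4 := by
  rw [swapKillingMatrix_mulVec, swapIncidence_mulVec_one, swapIncidence_transpose_mulVec_const]
  funext
  rw [sum_const, card_univ, card_swaps, nsmul_one, Nat.cast_choose_two]
  ring

theorem swapKillingMatrix_mulVec_swapIncidence_transpose_mulVec {v : α → ℝ} (hv : ∑ i, v i = 0) :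
    swapKillingMatrix α *ᵥ ((swapIncidence α)ᵀ *ᵥ v)
      = ((Fintype.card α : ℝ) ^ 2 - 6 * Fintype.card α + 12) • ((swapIncidence α)ᵀ *ᵥ v) := by
  have hBv : (fun i => ((Fintype.card α : ℝ) - 2) * v i + ∑ j, v j)
      = ((Fintype.card α : ℝ) - 2) • v := by
    funext i; simp [hv]
  rw [swapKillingMatrix_mulVec, swapIncidence_mulVec_transpose_mulVec, hBv,
    sum_swapIncidence_transpose_mulVec, hv, mulVec_smul]
  funext σ
  simp only [Pi.smul_apply, smul_eq_mul]
  ring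

theorem swapKillingMatrix_mulVec_of_swapIncidence_mulVec_eq_zero {w : (Swaps α) → ℝ}
    (hw : swapIncidence α *ᵥ w = 0) :
    swapKillingMatrix α *ᵥ w = (2 * Fintype.card α : ℝ) • w := by
  have hsum : ∑ σ, w σ = 0 := by
    have h := sum_swapIncidence_mulVec w
    rw [hw] at h
    simpa using h.symm
  rw [swapKillingMatrix_mulVec, hw, mulVec_zero, hsum]
  funext σ
  simp

variable (α) in
def swapConjugationMatrix : Matrix (Perm α × Perm α) (Swaps α) ℝ :=
  of fun hk a => if hk.1.IsSwap ∧ a.1 * hk.1 * a.1 = hk.2 then 1 else 0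

theorem swapKillingMatrix_eq_conjTranspose_mul :
    swapKillingMatrix α = (swapConjugationMatrix α)ᴴ * swapConjugationMatrix α := by
  ext a b
  simp only [swapKillingMatrix, swapConjugationMatrix, of_apply, Matrix.mul_apply,
    conjTranspose_apply, star_trivial, Fintype.sum_prod_type, natCast_card_filter]
  refine sum_congr rfl fun h _ => ?_
  have hc : h * (a.1 * b.1) = a.1 * b.1 * h ↔ _ :=
    commute_mul_iff_conj_eq_conj a.2.mul_self b.2.mul_self
  simp only [hc]
  by_cases hh : h.IsSwap <;> simp [hh, eq_comm]

theorem swapConjugationMatrix_mulVec_injective (hα : 2 < Fintype.card α) :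
    Function.Injective (swapConjugationMatrix α).mulVec := by
  intro x y hxy
  funext a
  obtain ⟨p, q, hpq, ha⟩ := a.2
  obtain ⟨z, -, hz⟩ := exists_mem_notMem_of_card_lt_card
    ((card_insert_le p {q}).trans_lt (by simpa using hα) : #{p, q} < #(univ : Finset α))
  have hpz : p ≠ z := by rintro rfl; simp at hz
  have hqz : q ≠ z := by rintro rfl; simp at hz
  have key : ∀ x : (Swaps α) → ℝ, (swapConjugationMatrix α *ᵥ x) (swap p z, swap q z) = x a := by
    intro x
    simp only [mulVec, dotProduct, swapConjugationMatrix, of_apply, ite_mul, one_mul, zero_mul]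
    rw [sum_eq_single a]
    · have hconj : a.1 * swap p z * a.1 = swap q z := by
        rw [ha, swap_comm p z, swap_mul_swap_mul_swap hpz.symm hqz.symm]
      rw [if_pos ⟨⟨p, z, hpz, rfl⟩, hconj⟩]
    · intro b _ hba
      rw [if_neg]
      rintro ⟨-, hb⟩
      exact hba (Subtype.ext ((b.2.eq_swap_of_mul_swap_mul_eq hpq hpz hb).trans ha.symm))
    · simp
  rw [← key x, ← key y, hxy]

theorem posDef_swapKillingMatrix (hα : 2 < Fintype.card α) : (swapKillingMatrix α).PosDef := by
  rw [swapKillingMatrix_eq_conjTranspose_mul]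
  exact .conjTranspose_mul_self _ (swapConjugationMatrix_mulVec_injective hα)

end Equiv.Perm

open Equiv.Perm

/-- For the 2-cycles class `C` of `S_n` (`n > 2`) the Killing form matrix
`K(a,b) = |Z(ab) ∩ C|` is positive definite; the all-ones vector `θ` (trivial
component) is an eigenvector with eigenvalue `(n⁴-10n³+41n²-72n+48)/4`; the
standard component (vectors `σ ↦ Σ_{i ∈ supp σ} v i` with `Σ v = 0`) has
eigenvalue `n²-6n+12`; and for `n > 3` the `S^{(n-2,2)}` component (functions
with vanishing row sums) has eigenvalue `2n`. -/
theorem stmt_17 (n : ℕ) (hn : 2 < n)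
    (M : Matrix {σ : Equiv.Perm (Fin n) // σ.IsSwap} {σ : Equiv.Perm (Fin n) // σ.IsSwap} ℝ)
    (hM : M = Matrix.of fun a b : {σ : Equiv.Perm (Fin n) // σ.IsSwap} => ((Finset.univ.filter fun h : Equiv.Perm (Fin n) =>
      h.IsSwap ∧ h * ((a : Equiv.Perm (Fin n)) * b) = ((a : Equiv.Perm (Fin n)) * b) * h).card : ℝ)) :
    M.PosDef ∧
    (M.mulVec (fun _ => 1) = fun _ =>
      (((n : ℝ) ^ 4 - 10 * n ^ 3 + 41 * n ^ 2 - 72 * n + 48) / 4)) ∧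
    (∀ v : Fin n → ℝ, ∑ i, v i = 0 →
      M.mulVec (fun σ => ∑ i ∈ (σ : Equiv.Perm (Fin n)).support, v i)
        = ((n : ℝ) ^ 2 - 6 * n + 12) • fun σ : {σ : Equiv.Perm (Fin n) // σ.IsSwap} =>
            ∑ i ∈ (σ : Equiv.Perm (Fin n)).support, v i) ∧
    (3 < n → ∀ w : {σ : Equiv.Perm (Fin n) // σ.IsSwap} → ℝ,
      (∀ i : Fin n, ∑ σ : {σ : Equiv.Perm (Fin n) // σ.IsSwap},
        (if i ∈ (σ : Equiv.Perm (Fin n)).support then w σ else 0) = 0) →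
      M.mulVec w = (2 * (n : ℝ)) • w) := by
  obtain rfl : M = swapKillingMatrix (Fin n) := hM
  refine ⟨posDef_swapKillingMatrix (by rwa [Fintype.card_fin]), ?_, fun v hv => ?_,
    fun _ w hw => ?_⟩
  · simpa using swapKillingMatrix_mulVec_one (α := Fin n)
  · have hBv : (fun σ : {σ : Equiv.Perm (Fin n) // σ.IsSwap} => ∑ i ∈ σ.1.support, v i)
        = (swapIncidence (Fin n))ᵀ *ᵥ v :=
      funext fun σ => (swapIncidence_transpose_mulVec_apply v σ).symm
    simpa [hBv] using swapKillingMatrix_mulVec_swapIncidence_transpose_mulVec hv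
  · have hBw : swapIncidence (Fin n) *ᵥ w = 0 :=
      funext fun i => by rw [swapIncidence_mulVec_apply, hw i, Pi.zero_apply]
    simpa using swapKillingMatrix_mulVec_of_swapIncidence_mulVec_eq_zero hBw
end

section
/- The sign representation of S_n occurs in the conjugation representation ℂC_μ on the conjugacy class of cycle type μ if and only if all elements of the centraliser of any element of C_μ are even permutations, which holds if and only if μ is a partition of n into distinct odd parts; moreover when it occurs, its multiplicity is exactly one. -/
/-- The conjugation representation of `S_n` on the span of the conjugacy class
of a fixed permutation `σ₀`, realised as functions on that class. -/
def classConjRep (n : ℕ) (σ₀ : Equiv.Perm (Fin n)) :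
    Representation ℂ (Equiv.Perm (Fin n)) ({τ : Equiv.Perm (Fin n) // IsConj σ₀ τ} → ℂ) where
  toFun g :=
    { toFun := fun f τ => f ⟨g⁻¹ * (τ : Equiv.Perm (Fin n)) * g,
        τ.2.trans (isConj_iff.mpr ⟨g⁻¹, by group⟩)⟩
      map_add' := fun _ _ => rfl
      map_smul' := fun _ _ => rfl }
  map_one' := by
    ext f τ
    simp
  map_mul' g h :=
    LinearMap.ext fun f => funext fun τ => congrArg f (Subtype.ext (by group))

/-- The sign-isotypical component of the conjugation representation on the
conjugacy class of `σ₀`: the subspace of functions `f` with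
`ρ(g) f = sign(g) · f` for all `g`. -/
noncomputable def signComponent (n : ℕ) (σ₀ : Equiv.Perm (Fin n)) :
    Submodule ℂ ({τ : Equiv.Perm (Fin n) // IsConj σ₀ τ} → ℂ) :=
  ⨅ g : Equiv.Perm (Fin n),
    LinearMap.ker (classConjRep n σ₀ g - ((Equiv.Perm.sign g : ℤ) : ℂ) • LinearMap.id)

/-!
A function `f` on the conjugacy class of `x` transforming by a character `χ` under conjugation
satisfies `f (c * x * c⁻¹) = χ c * f x`, so it is determined by `f x` and the `χ`-component has
dimension at most one. Conversely `c * x * c⁻¹ ↦ χ c` is well defined exactly when `χ` is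
trivial on the centraliser of `x`. For `χ = sign`, Mathlib's characterisation of centralisers
inside the alternating group (odd cycle lengths, no repeated length, at most one fixed point)
says precisely that the parts of the cycle-type partition are distinct and odd.
-/

open Equiv Equiv.Perm Finset

section ConjClass

variable {G : Type*} [Group G]

def conjClassSemiinvariants (χ : G →* ℤˣ) (x : G) :
    Submodule ℂ ({y : G // IsConj x y} → ℂ) where
  carrier := {f | ∀ (g : G) (y : {y : G // IsConj x y}),
    f ⟨g⁻¹ * y * g, y.2.trans (isConj_iff.mpr ⟨g⁻¹, by group⟩)⟩ = (χ g : ℂ) * f y}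
  add_mem' hf hf' g y := by simp only [Pi.add_apply, hf g y, hf' g y, mul_add]
  zero_mem' _ _ := by simp
  smul_mem' c f hf g y := by simp only [Pi.smul_apply, hf g y, smul_eq_mul]; ring

variable {χ : G →* ℤˣ} {x : G} {f : {y : G // IsConj x y} → ℂ}

lemma apply_conj_of_mem_conjClassSemiinvariants (hf : f ∈ conjClassSemiinvariants χ x) (c : G) :
    f ⟨c * x * c⁻¹, isConj_iff.mpr ⟨c, rfl⟩⟩ = (χ c : ℂ) * f ⟨x, IsConj.refl x⟩ := by
  have h := hf c ⟨c * x * c⁻¹, isConj_iff.mpr ⟨c, rfl⟩⟩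
  simp only [show c⁻¹ * (c * x * c⁻¹) * c = x by group] at h
  rw [h, ← mul_assoc, ← Int.cast_mul, ← Units.val_mul, Int.units_mul_self]
  simp

lemma eq_zero_of_mem_conjClassSemiinvariants (hf : f ∈ conjClassSemiinvariants χ x)
    (hx : f ⟨x, IsConj.refl x⟩ = 0) : f = 0 := by
  funext ⟨y, hy⟩
  obtain ⟨c, rfl⟩ := isConj_iff.mp hy
  rw [apply_conj_of_mem_conjClassSemiinvariants hf c, hx, mul_zero, Pi.zero_apply]

variable (χ x) in
lemma injective_eval_conjClassSemiinvariants :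
    Function.Injective (LinearMap.proj (R := ℂ) (φ := fun _ ↦ ℂ) ⟨x, IsConj.refl x⟩ ∘ₗ
      (conjClassSemiinvariants χ x).subtype) := by
  refine (injective_iff_map_eq_zero _).mpr fun f hf ↦ Subtype.ext ?_
  exact eq_zero_of_mem_conjClassSemiinvariants f.2 hf

instance : Module.Finite ℂ (conjClassSemiinvariants χ x) :=
  Module.Finite.of_injective _ (injective_eval_conjClassSemiinvariants χ x)

lemma finrank_conjClassSemiinvariants_le_one :
    Module.finrank ℂ (conjClassSemiinvariants χ x) ≤ 1 :=
  (LinearMap.finrank_le_finrank_of_injective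
    (injective_eval_conjClassSemiinvariants χ x)).trans_eq (Module.finrank_self ℂ)

lemma mem_ker_of_mem_centralizer (hf : f ∈ conjClassSemiinvariants χ x) (hf₀ : f ≠ 0) {g : G}
    (hg : g ∈ Subgroup.centralizer {x}) : g ∈ χ.ker := by
  have hx : f ⟨x, IsConj.refl x⟩ ≠ 0 := mt (eq_zero_of_mem_conjClassSemiinvariants hf) hf₀
  have h := hf g ⟨x, IsConj.refl x⟩
  have hgx : g⁻¹ * x * g = x := by
    rw [mul_assoc, ← Subgroup.mem_centralizer_singleton_iff.mp hg, inv_mul_cancel_left]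
  simp only [hgx] at h
  have hχ : ((χ g : ℤ) : ℂ) = 1 := (mul_eq_right₀ hx).mp h.symm
  rw [MonoidHom.mem_ker, ← Units.val_eq_one]
  exact_mod_cast hχ

lemma exists_mem_conjClassSemiinvariants_ne_zero (h : Subgroup.centralizer {x} ≤ χ.ker) :
    ∃ f ∈ conjClassSemiinvariants χ x, f ≠ 0 := by
  choose c hc using fun y : {y : G // IsConj x y} ↦ isConj_iff.mp y.2
  refine ⟨fun y ↦ ((χ (c y) : ℤ) : ℂ), fun g y ↦ ?_, fun h0 ↦ ?_⟩
  · set y' : {y : G // IsConj x y} := ⟨g⁻¹ * y * g, y.2.trans (isConj_iff.mpr ⟨g⁻¹, by group⟩)⟩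
    have hconj : c y' * x * (c y')⁻¹ = g⁻¹ * (c y * x * (c y)⁻¹) * g := by
      rw [hc y', hc y]
    have hcen : (c y)⁻¹ * g * c y' ∈ Subgroup.centralizer {x} := by
      rw [Subgroup.mem_centralizer_singleton_iff, ← mul_inv_eq_iff_eq_mul]
      calc (c y)⁻¹ * g * c y' * x * ((c y)⁻¹ * g * c y')⁻¹
          = (c y)⁻¹ * g * (c y' * x * (c y')⁻¹) * g⁻¹ * c y := by group
        _ = x := by rw [hconj]; group
    have hχ : χ (c y') = χ g * χ (c y) := by
      have h1 := h hcen
      rw [MonoidHom.mem_ker, map_mul, map_mul, map_inv, mul_assoc, inv_mul_eq_one] at h1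
      rw [h1, ← mul_assoc, Int.units_mul_self, one_mul]
    simp only [hχ, Units.val_mul, Int.cast_mul]
  · have hx := congrFun h0 ⟨x, IsConj.refl x⟩
    simp at hx

lemma conjClassSemiinvariants_ne_bot_iff :
    conjClassSemiinvariants χ x ≠ ⊥ ↔ Subgroup.centralizer {x} ≤ χ.ker := by
  rw [Submodule.ne_bot_iff]
  constructor
  · rintro ⟨f, hf, hf₀⟩ g hg
    exact mem_ker_of_mem_centralizer hf hf₀ hg
  · exact exists_mem_conjClassSemiinvariants_ne_zero

lemma finrank_conjClassSemiinvariants_of_ne_bot (h : conjClassSemiinvariants χ x ≠ ⊥) :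
    Module.finrank ℂ (conjClassSemiinvariants χ x) = 1 :=
  le_antisymm finrank_conjClassSemiinvariants_le_one
    (Nat.one_le_iff_ne_zero.mpr (mt Submodule.finrank_eq_zero.mp h))

end ConjClass

lemma signComponent_eq_conjClassSemiinvariants (n : ℕ) (σ₀ : Perm (Fin n)) :
    signComponent n σ₀ = conjClassSemiinvariants sign σ₀ := by
  ext f
  simp [signComponent, classConjRep, conjClassSemiinvariants, Submodule.mem_iInf, funext_iff,
    sub_eq_zero]

lemma centralizer_le_alternatingGroup_iff_partition {α : Type*} [Fintype α] [DecidableEq α]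
    (σ : Perm α) : Subgroup.centralizer {σ} ≤ alternatingGroup α ↔
      σ.partition.parts.Nodup ∧ ∀ k ∈ σ.partition.parts, Odd k := by
  have hdisj : Disjoint σ.cycleType (Multiset.replicate (Fintype.card α - #σ.support) 1) :=
    Multiset.disjoint_left.mpr fun hk h1 ↦ by
      have := two_le_of_mem_cycleType hk
      rw [Multiset.eq_of_mem_replicate h1] at this
      omega
  rw [centralizer_le_alternating_iff, ← Multiset.nodup_iff_count_le_one, sum_cycleType,
    parts_partition, Multiset.nodup_add, and_iff_left hdisj, ← Multiset.coe_replicate,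
    Multiset.coe_nodup, List.nodup_replicate]
  simp only [Multiset.mem_add, Multiset.mem_coe, List.mem_replicate, or_imp, forall_and,
    and_imp]
  have hfix : Fintype.card α ≤ #σ.support + 1 ↔ Fintype.card α - #σ.support ≤ 1 := by omega
  tauto

/-- The sign representation occurs in the conjugation representation on the
class of `σ₀` iff the centraliser of `σ₀` consists of even permutations, iff
the partition of `σ₀` (its cycle type, padded with fixed points) has distinct
odd parts; and when it occurs, it occurs with multiplicity exactly one. -/
theorem stmt_18 (n : ℕ) (σ₀ : Equiv.Perm (Fin n)) :
    ((signComponent n σ₀ ≠ ⊥) ↔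
      ∀ τ : Equiv.Perm (Fin n), τ * σ₀ = σ₀ * τ → Equiv.Perm.sign τ = 1) ∧
    ((signComponent n σ₀ ≠ ⊥) ↔
      (σ₀.partition.parts.Nodup ∧ ∀ k ∈ σ₀.partition.parts, Odd k)) ∧
    ((signComponent n σ₀ ≠ ⊥) → Module.finrank ℂ (signComponent n σ₀) = 1) := by
  have hA : signComponent n σ₀ ≠ ⊥ ↔ Subgroup.centralizer {σ₀} ≤ alternatingGroup (Fin n) := by
    rw [signComponent_eq_conjClassSemiinvariants, conjClassSemiinvariants_ne_bot_iff,
      alternatingGroup_eq_sign_ker]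
  refine ⟨hA.trans ?_, hA.trans (centralizer_le_alternatingGroup_iff_partition σ₀), fun h ↦ ?_⟩
  · simp only [SetLike.le_def, Subgroup.mem_centralizer_singleton_iff, mem_alternatingGroup]
  · rw [signComponent_eq_conjClassSemiinvariants] at h ⊢
    exact finrank_conjClassSemiinvariants_of_ne_bot h
end
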